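/- For all integers n ≥ 4, the number of internal triangles satisfies (n+2)*C_{n-1} - 2*C_n = 2 * binomial(2n-3, n-4), where C_m denotes the m-th Catalan number. -/

import Mathlib

/-- The m-th Catalan number as a rational: binomial(2m, m)/(m+1). -/
def catalanQ (m : ℕ) : ℚ := (Nat.choose (2 * m) m : ℚ) / (m + 1)

/-! Writing `B = choose (2n-3) (n-4)`, both Catalan numbers in the formula are rational multiples
of `B`: `(n-3)(n-2) C_{n-1} = 2(n+1) B` and `(n+1) C_n = 2(2n-1) C_{n-1}`. Substituting, the
left-hand side collapses to `2B`. -/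

namespace Nat

theorem choose_add_two_mul (n k : ℕ) :
    n.choose (k + 2) * ((k + 1) * (k + 2)) = n.choose k * ((n - k) * (n - (k + 1))) := by
  calc n.choose (k + 2) * ((k + 1) * (k + 2))
      = n.choose (k + 1 + 1) * (k + 1 + 1) * (k + 1) := by ring
    _ = n.choose k * (n - k) * (n - (k + 1)) := by
        rw [choose_succ_right_eq, mul_right_comm, choose_succ_right_eq]
    _ = n.choose k * ((n - k) * (n - (k + 1))) := by ring

theorem centralBinom_succ_eq_two_mul_choose (m : ℕ) :
    centralBinom (m + 1) = 2 * (2 * m + 1).choose m := by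
  rw [centralBinom_eq_two_mul_choose, show 2 * (m + 1) = 2 * m + 1 + 1 by ring,
    choose_succ_succ, choose_symm_half]
  ring

end Nat

theorem catalanQ_eq_centralBinom_div (m : ℕ) : catalanQ m = m.centralBinom / (m + 1) := by
  rw [catalanQ, Nat.centralBinom_eq_two_mul_choose]

theorem add_two_mul_catalanQ_succ (m : ℕ) :
    ((m : ℚ) + 2) * catalanQ (m + 1) = 2 * (2 * m + 1) * catalanQ m := by
  have key : ((m : ℚ) + 1) * (m + 1).centralBinom = 2 * (2 * m + 1) * m.centralBinom := by
    exact_mod_cast Nat.succ_mul_centralBinom_succ m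
  rw [catalanQ_eq_centralBinom_div, catalanQ_eq_centralBinom_div]
  field_simp
  push_cast
  linear_combination ((m : ℚ) + 2) * key

theorem catalanQ_add_three_eq_choose (k : ℕ) :
    ((k : ℚ) + 1) * (k + 2) * catalanQ (k + 3) = 2 * (k + 5) * (2 * k + 5).choose k := by
  have central : (k + 3).centralBinom = 2 * (2 * k + 5).choose (k + 2) :=
    Nat.centralBinom_succ_eq_two_mul_choose (k + 2)
  have shift : ((2 * k + 5).choose (k + 2) : ℚ) * ((k + 1) * (k + 2))
      = (2 * k + 5).choose k * ((k + 5) * (k + 4)) := by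
    have h := Nat.choose_add_two_mul (2 * k + 5) k
    rw [show 2 * k + 5 - k = k + 5 by omega, show 2 * k + 5 - (k + 1) = k + 4 by omega] at h
    exact_mod_cast h
  rw [catalanQ_eq_centralBinom_div, central]
  field_simp
  push_cast
  linear_combination 2 * shift

theorem internal_triangles_formula (n : ℕ) (hn : 4 ≤ n) :
    ((n : ℚ) + 2) * catalanQ (n - 1) - 2 * catalanQ n
      = 2 * (Nat.choose (2 * n - 3) (n - 4) : ℚ) := by
  obtain ⟨k, rfl⟩ := Nat.exists_eq_add_of_le' hn
  rw [show k + 4 - 1 = k + 3 by omega, show 2 * (k + 4) - 3 = 2 * k + 5 by omega,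
    Nat.add_sub_cancel]
  have recurrence := add_two_mul_catalanQ_succ (k + 3)
  have closed := catalanQ_add_three_eq_choose k
  push_cast at recurrence ⊢
  have hk : (k : ℚ) + 5 ≠ 0 := by positivity
  refine mul_left_cancel₀ hk ?_
  linear_combination -2 * recurrence + closed
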